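/- Minimality transfers under lifting: if σ is a perturbation on X and m is a minimal trap space of the perturbed network f^σ, then the lifted subspace m' of the encoding network g (extending m with m'(v^k), m'(v^o) encoding σ as in the standard decoding) is a minimal trap space of g. -/

import Mathlib

/-- A state `s` belongs to the subspace `m` (none = free/⋆). -/
def inSub {V : Type*} (m : V → Option Bool) (s : V → Bool) : Prop :=
  ∀ v b, m v = some b → s v = b

/-- The synchronous update of a Boolean network. -/
def syncUpdate {V : Type*} (f : V → (V → Bool) → Bool) (s : V → Bool) : V → Bool :=
  fun v => f v s

/-- `m` is a trap space: `S[m]` is closed under the synchronous update. -/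
def IsTrapSpace {V : Type*} (f : V → (V → Bool) → Bool) (m : V → Option Bool) : Prop :=
  ∀ s, inSub m s → inSub m (syncUpdate f s)

/-- Boolean expressions over a variable set `V`. -/
inductive BExpr (V : Type*) where
  | const : Bool → BExpr V
  | var : V → BExpr V
  | not : BExpr V → BExpr V
  | and : BExpr V → BExpr V → BExpr V
  | or : BExpr V → BExpr V → BExpr V

/-- Two-valued evaluation of a Boolean expression at a state. -/
def BExpr.eval {V : Type*} : BExpr V → (V → Bool) → Bool
  | .const b, _ => b
  | .var v, s => s v
  | .not e, s => !(e.eval s)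
  | .and e₁ e₂, s => e₁.eval s && e₂.eval s
  | .or e₁ e₂, s => e₁.eval s || e₂.eval s

/-- Minimum w.r.t. the total order 0 <_t ⋆ <_t 1 (⋆ = none). -/
def tmin : Option Bool → Option Bool → Option Bool
  | some false, _ => some false
  | _, some false => some false
  | some true, y => y
  | x, some true => x
  | none, none => none

/-- Maximum w.r.t. the total order 0 <_t ⋆ <_t 1 (⋆ = none). -/
def tmax : Option Bool → Option Bool → Option Bool
  | some true, _ => some true
  | _, some true => some true
  | some false, y => y
  | x, some false => x
  | none, none => none

/-- Kleene three-valued evaluation of a Boolean expression under a subspace. -/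
def BExpr.keval {V : Type*} : BExpr V → (V → Option Bool) → Option Bool
  | .const b, _ => some b
  | .var v, m => m v
  | .not e, m => (e.keval m).map (fun b => !b)
  | .and e₁ e₂, m => tmin (e₁.keval m) (e₂.keval m)
  | .or e₁ e₂, m => tmax (e₁.keval m) (e₂.keval m)

/-- The partial order ≤_s on {0,1,⋆}: x ≤_s y iff x = y or y = ⋆. -/
def leS (x y : Option Bool) : Prop := x = y ∨ y = none

/-- Trap space via the three-valued characterization: m(f_v) ≤_s m(v) for all v. -/
def IsTrapK {V : Type*} (f : V → BExpr V) (m : V → Option Bool) : Prop :=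
  ∀ v, leS ((f v).keval m) (m v)

/-- ≤_s-minimal trap space (three-valued characterization). -/
def IsMinTrapK {V : Type*} (f : V → BExpr V) (m : V → Option Bool) : Prop :=
  IsTrapK f m ∧ ∀ m', IsTrapK f m' → (∀ v, leS (m' v) (m v)) → m' = m

/-- Renaming of variables in a Boolean expression. -/
def BExpr.map {V W : Type*} (φ : V → W) : BExpr V → BExpr W
  | .const b => .const b
  | .var v => .var (φ v)
  | .not e => .not (e.map φ)
  | .and e₁ e₂ => .and (e₁.map φ) (e₂.map φ)
  | .or e₁ e₂ => .or (e₁.map φ) (e₂.map φ)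

/-- Variables of the perturbation-encoding network: original variables plus,
for each perturbable `v ∈ X`, variables `v^k = inr (v, true)` and `v^o = inr (v, false)`. -/
abbrev PVar (V : Type) (X : Finset V) := V ⊕ ({v : V // v ∈ X} × Bool)

/-- The perturbation-encoding network `g` of `f` w.r.t. perturbable set `X`:
`g_{v^k} = v^k`, `g_{v^o} = v^o ∧ ¬v^k`, `g_v = ¬v^k ∧ (v^o ∨ f_v)` for `v ∈ X`,
and `g_u = f_u` otherwise. -/
def pertEnc {V : Type} [DecidableEq V] (f : V → BExpr V) (X : Finset V) :
    PVar V X → BExpr (PVar V X)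
  | .inl v =>
      if h : v ∈ X then
        .and (.not (.var (.inr (⟨v, h⟩, true))))
          (.or (.var (.inr (⟨v, h⟩, false))) ((f v).map .inl))
      else (f v).map .inl
  | .inr (x, true) => .var (.inr (x, true))
  | .inr (x, false) => .and (.var (.inr (x, false))) (.not (.var (.inr (x, true))))

/-- The perturbed network `f^σ`: perturbed variables get the constant `σ(v)`,
unperturbed ones (σ(v) = ⋆) keep `f_v`. -/
def pertNet {V : Type} [DecidableEq V] (f : V → BExpr V) (X : Finset V)
    (σ : {v : V // v ∈ X} → Option Bool) : V → BExpr V := fun v =>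
  if h : v ∈ X then
    match σ ⟨v, h⟩ with
    | some b => .const b
    | none => f v
  else f v

/-- Decode the perturbation from the values of `v^k` and `v^o`:
σ(v) = 1 iff (k,o) = (0,1); σ(v) = 0 iff (k,o) = (1,0); σ(v) = ⋆ iff (k,o) = (0,0). -/
def decodePert (k o : Option Bool) : Option Bool :=
  if k = some false ∧ o = some true then some true
  else if k = some true ∧ o = some false then some false
  else none

/-- The lifted subspace: `m` on the original variables, and on the encoding
variables the values encoding the perturbation `σ`:
(k,o) = (1,0) if σ(v)=0, (0,1) if σ(v)=1, (0,0) if σ(v)=⋆. -/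
def liftSub {V : Type} (X : Finset V) (σ : {v : V // v ∈ X} → Option Bool)
    (m : V → Option Bool) : PVar V X → Option Bool
  | .inl v => m v
  | .inr (x, true) => some (decide (σ x = some false))
  | .inr (x, false) => some (decide (σ x = some true))


/-!
Below the lift of `m`, the encoding variables `v^k`, `v^o` are fixed to the values encoding `σ`;
those values are a fixed point of their own rules, and with them the rule of `g` at each original
variable evaluates exactly like the rule of `f^σ`. So the trap spaces of `g` below the lift are
precisely the lifts of the trap spaces of `f^σ` below `m`, and minimality transfers.
-/

namespace BExpr

theorem keval_map {V W : Type*} (φ : V → W) (e : BExpr V) (n : W → Option Bool) :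
    (e.map φ).keval n = e.keval (n ∘ φ) := by
  induction e <;> simp_all [BExpr.map, BExpr.keval]

end BExpr

theorem eq_of_leS_some {x : Option Bool} {b : Bool} (h : leS x (some b)) : x = some b :=
  h.resolve_right (Option.some_ne_none b)

theorem tmin_some_false (y : Option Bool) : tmin (some false) y = some false := rfl

theorem tmax_some_true (y : Option Bool) : tmax (some true) y = some true := rfl

theorem tmin_some_true (y : Option Bool) : tmin (some true) y = y := by
  rcases y with _ | _ | _ <;> rfl

theorem tmax_some_false (y : Option Bool) : tmax (some false) y = y := by
  rcases y with _ | _ | _ <;> rfl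

section Encoding

variable {V : Type} {X : Finset V} {σ : {v : V // v ∈ X} → Option Bool}

def EncodesPert (σ : {v : V // v ∈ X} → Option Bool) (n : PVar V X → Option Bool) : Prop :=
  ∀ x, n (.inr (x, true)) = some (decide (σ x = some false)) ∧
    n (.inr (x, false)) = some (decide (σ x = some true))

theorem encodesPert_liftSub (m : V → Option Bool) : EncodesPert σ (liftSub X σ m) :=
  fun _ => ⟨rfl, rfl⟩

theorem EncodesPert.of_leS {m : V → Option Bool} {n : PVar V X → Option Bool}
    (h : ∀ u, leS (n u) (liftSub X σ m u)) : EncodesPert σ n :=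
  fun x => ⟨eq_of_leS_some (h (.inr (x, true))), eq_of_leS_some (h (.inr (x, false)))⟩

theorem EncodesPert.eq_liftSub {n : PVar V X → Option Bool} (h : EncodesPert σ n) :
    n = liftSub X σ (n ∘ Sum.inl) := by
  funext u
  rcases u with v | ⟨x, _ | _⟩
  exacts [rfl, (h x).2, (h x).1]

variable [DecidableEq V] {n : PVar V X → Option Bool}

/-- With `(v^k, v^o)` fixed to `(1,0)`, `(0,1)` or `(0,0)`, the rule `¬v^k ∧ (v^o ∨ f_v)` evaluates to
`0`, `1` or `f_v`. -/
theorem EncodesPert.keval_pertEnc_inl (f : V → BExpr V) (h : EncodesPert σ n) (v : V) :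
    (pertEnc f X (.inl v)).keval n = (pertNet f X σ v).keval (n ∘ Sum.inl) := by
  by_cases hv : v ∈ X
  · obtain ⟨hk, ho⟩ := h ⟨v, hv⟩
    rcases hσ : σ ⟨v, hv⟩ with _ | _ | _ <;>
      simp_all [pertEnc, pertNet, BExpr.keval, BExpr.keval_map, tmin_some_true, tmin_some_false,
        tmax_some_true, tmax_some_false]
  · simp [pertEnc, pertNet, hv, BExpr.keval_map]

theorem EncodesPert.keval_pertEnc_inr (f : V → BExpr V) (h : EncodesPert σ n)
    (p : {v : V // v ∈ X} × Bool) : (pertEnc f X (.inr p)).keval n = n (.inr p) := by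
  obtain ⟨x, _ | _⟩ := p
  · obtain ⟨hk, ho⟩ := h x
    rcases hσ : σ x with _ | _ | _ <;> simp_all [pertEnc, BExpr.keval, tmin]
  · rfl

theorem EncodesPert.isTrapK_pertEnc_iff (f : V → BExpr V) (h : EncodesPert σ n) :
    IsTrapK (pertEnc f X) n ↔ IsTrapK (pertNet f X σ) (n ∘ Sum.inl) := by
  refine ⟨fun hn v => ?_, fun hn u => ?_⟩
  · simpa [h.keval_pertEnc_inl] using hn (.inl v)
  · rcases u with v | p
    · simpa [h.keval_pertEnc_inl] using hn v
    · exact .inl (h.keval_pertEnc_inr f p)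

end Encoding

theorem minimal_trap_space_lifting_general {V : Type} [DecidableEq V]
    (f : V → BExpr V) (X : Finset V) (σ : {v : V // v ∈ X} → Option Bool)
    (m : V → Option Bool) (hm : IsMinTrapK (pertNet f X σ) m) :
    IsMinTrapK (pertEnc f X) (liftSub X σ m) := by
  refine ⟨((encodesPert_liftSub m).isTrapK_pertEnc_iff f).2 hm.1, fun n hn hle => ?_⟩
  have hn_enc : EncodesPert σ n := .of_leS hle
  calc n = liftSub X σ (n ∘ Sum.inl) := hn_enc.eq_liftSub
    _ = liftSub X σ m := by
      rw [hm.2 _ ((hn_enc.isTrapK_pertEnc_iff f).1 hn) fun v => hle (.inl v)]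

/-- Minimality transfers under lifting: if `m` is a minimal trap space of `f^σ`,
then the lifted subspace is a minimal trap space of the encoding network `g`. -/
theorem minimal_trap_space_lifting {V : Type} [Fintype V] [DecidableEq V]
    (f : V → BExpr V) (X : Finset V) (σ : {v : V // v ∈ X} → Option Bool)
    (m : V → Option Bool) (hm : IsMinTrapK (pertNet f X σ) m) :
    IsMinTrapK (pertEnc f X) (liftSub X σ m) :=
  minimal_trap_space_lifting_general f X σ m hm
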